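/- arXiv:2503.11042 — 3 statements merged into one kernel-verified Lean document; each statement's English description precedes it below -/
import Mathlib

section
/- Let 0 ≤ t_1 ≤ t_2 ≤ … ≤ t_n and t'_1, …, t'_n ≥ 0 be real numbers. Then the simplex Δ(t'_1,…,t'_n) is contained in the polytope ∇(t_1,…,t_n) if and only if t'_i ≤ t_i for all i = 1, …, n. -/
/-- The simplex `Δ(t₁,…,tₙ) ⊆ ℝⁿ`: convex hull of `0` and the points `tᵢ·eᵢ`. -/
def simplexSet (n : ℕ) (t : Fin n → ℝ) : Set (Fin n → ℝ) :=
  convexHull ℝ (insert (0 : Fin n → ℝ) {x | ∃ i : Fin n, x = Pi.single i (t i)})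

/-- The polytope `∇(t₁,…,tₙ) := {ν ∈ ℝⁿ_{≥0} : ν₁ + … + νᵢ ≤ tᵢ for all i}`. -/
def nablaSet (n : ℕ) (t : Fin n → ℝ) : Set (Fin n → ℝ) :=
  {ν | (∀ i, 0 ≤ ν i) ∧ ∀ i : Fin n, ∑ j ∈ Finset.Iic i, ν j ≤ t i}

lemma nabla_convex (n : ℕ) (t : Fin n → ℝ) : Convex ℝ (nablaSet n t) := by
  intro x hx y hy a b ha hb hab
  constructor
  · intro i
    have := hx.1 i; have := hy.1 i
    simp only [Pi.add_apply, Pi.smul_apply, smul_eq_mul]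
    nlinarith
  · intro i
    have hxi := hx.2 i; have hyi := hy.2 i
    simp only [Pi.add_apply, Pi.smul_apply, smul_eq_mul]
    rw [Finset.sum_add_distrib, ← Finset.mul_sum, ← Finset.mul_sum]
    calc a * ∑ j ∈ Finset.Iic i, x j + b * ∑ j ∈ Finset.Iic i, y j
        ≤ a * t i + b * t i :=
          add_le_add (mul_le_mul_of_nonneg_left hxi ha) (mul_le_mul_of_nonneg_left hyi hb)
      _ = t i := by rw [← add_mul, hab, one_mul]

lemma single_sum (n : ℕ) (i j : Fin n) (c : ℝ) :
    ∑ k ∈ Finset.Iic j, Pi.single i c k = if i ≤ j then c else 0 := by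
  simp [Pi.single_apply, Finset.sum_ite_eq', Finset.mem_Iic]

/-- For `0 ≤ t₁ ≤ … ≤ tₙ` and `t'ᵢ ≥ 0`, the simplex `Δ(t')` is contained in the
polytope `∇(t)` if and only if `t'ᵢ ≤ tᵢ` for all `i`. -/
theorem simplex_subset_nabla_iff (n : ℕ) (t t' : Fin n → ℝ)
    (ht0 : ∀ i, 0 ≤ t i) (htmono : ∀ i j : Fin n, i ≤ j → t i ≤ t j)
    (ht'0 : ∀ i, 0 ≤ t' i) :
    simplexSet n t' ⊆ nablaSet n t ↔ ∀ i, t' i ≤ t i := by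
  constructor
  · intro h i
    have hmem : Pi.single i (t' i) ∈ nablaSet n t :=
      h (subset_convexHull ℝ _ (Set.mem_insert_iff.mpr (Or.inr ⟨i, rfl⟩)))
    have := hmem.2 i
    rwa [single_sum, if_pos le_rfl] at this
  · intro h
    apply convexHull_min _ (nabla_convex n t)
    rintro x (rfl | ⟨i, rfl⟩)
    · exact ⟨fun i => le_rfl, fun i => by simpa using ht0 i⟩
    · refine ⟨fun j => ?_, fun j => ?_⟩
      · rcases eq_or_ne j i with rfl | hne
        · simp [ht'0 j]
        · simp [Pi.single_apply, hne]
      · rw [single_sum]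
        split_ifs with hij
        · exact (h i).trans (htmono i j hij)
        · exact ht0 j
end

section
/- Let P ⊆ ℝ^m_{≥0} be a nonempty Borel-fixed compact convex set with widths w_1(P) ≤ … ≤ w_m(P). Then (1/m!)·∏_{i=1}^m w_i(P) ≤ vol_{ℝ^m}(P) ≤ ∏_{i=1}^m w_i(P), where vol_{ℝ^m} denotes the m-dimensional Lebesgue measure. -/
/-!
The upper bound holds because `P` lies in the box `∏ [0, wᵢ]`. For the lower bound, take a point
of `P` whose `i`-th coordinate is `wᵢ`. The Borel moves at `0, …, i-1` sweep the mass of its first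
`i` coordinates into coordinate `i`, and the moves at `i+1, …, m-1` push the mass of the later
coordinates off the end; this puts `s eᵢ` in `P` for some `s ≥ wᵢ`, hence `wᵢ eᵢ ∈ P` by
convexity, as `0 ∈ P`. So `P` contains the convex hull of `0, w₁e₁, …, w_m e_m`, the image under
`diag w` of the corner simplex `{y ≥ 0, ∑ yᵢ ≤ 1}`, which has volume `1 / m!`.
-/

/-- The elementary Borel move on `ℝ^m`: for `i < m` it sends `(a₁,…,a_m)` to
`(a₁,…,a_{i-1}, 0, a_i + a_{i+1}, a_{i+2},…,a_m)`, and for the last index it sends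
`(a₁,…,a_m)` to `(a₁,…,a_{m-1}, 0)`. -/
def borelMove (m : ℕ) (i : Fin m) (a : Fin m → ℝ) : Fin m → ℝ :=
  if h : (i : ℕ) + 1 < m then
    Function.update (Function.update a i 0) ⟨(i : ℕ) + 1, h⟩ (a i + a ⟨(i : ℕ) + 1, h⟩)
  else Function.update a i 0

/-- A set `P ⊆ ℝ^m_{≥0}` is Borel-fixed if it is stable under all elementary Borel moves:
`(a₁,…,a_m) ∈ P` implies `(a₁,…,a_{i-1},0,a_i+a_{i+1},a_{i+2},…,a_m) ∈ P` for `i ≤ m-1`,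
and `(a₁,…,a_{m-1},0) ∈ P`. -/
def BorelFixedPt (m : ℕ) (P : Set (Fin m → ℝ)) : Prop :=
  ∀ a ∈ P, ∀ i : Fin m, borelMove m i a ∈ P

open MeasureTheory Set Finset Nat

section BorelFixed

variable {m : ℕ}

lemma borelMove_apply (i j : Fin m) (a : Fin m → ℝ) :
    borelMove m i a j = if j = i then 0 else if (j : ℕ) = i + 1 then a i + a j else a j := by
  unfold borelMove
  split_ifs with h hji hj hji hj
  · simp [hji, Fin.ext_iff]
  · obtain rfl : j = ⟨i + 1, h⟩ := Fin.ext hj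
    simp
  · simp [Fin.ext_iff, hj, Fin.val_ne_of_ne hji]
  · simp [hji]
  · omega
  · simp [hji]

namespace BorelFixedPt

variable {P : Set (Fin m → ℝ)}

lemma truncate_mem (hB : BorelFixedPt m P) {a : Fin m → ℝ} (ha : a ∈ P) {l : ℕ} (hl : l ≤ m) :
    (fun j : Fin m => if (j : ℕ) < l then a j else 0) ∈ P := by
  induction hl using Nat.decreasingInduction generalizing a with
  | self => simpa using ha
  | of_succ l hl ih =>
    convert ih (hB a ha ⟨l, hl⟩) using 1
    funext j
    simp only [borelMove_apply, Fin.ext_iff]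
    split_ifs <;> first | rfl | omega

lemma zero_mem (hB : BorelFixedPt m P) (hne : P.Nonempty) : 0 ∈ P := by
  simpa [Pi.zero_def] using hB.truncate_mem hne.some_mem (Nat.zero_le m)

lemma exists_mem_vanishing_below (hB : BorelFixedPt m P) (hP : P ⊆ {x | ∀ k, 0 ≤ x k})
    {a : Fin m → ℝ} (ha : a ∈ P) {k : ℕ} (hk : k < m) :
    ∃ b ∈ P, (∀ j : Fin m, (j : ℕ) < k → b j = 0) ∧ a ⟨k, hk⟩ ≤ b ⟨k, hk⟩ ∧
      ∀ j : Fin m, k < j → b j = a j := by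
  induction k with
  | zero => exact ⟨a, ha, by simp, le_rfl, fun _ _ => rfl⟩
  | succ k ih =>
    obtain ⟨b, hb, hlt, hle, hgt⟩ := ih (by omega)
    refine ⟨borelMove m ⟨k, by omega⟩ b, hB b hb _, fun j hj => ?_, ?_, fun j hj => ?_⟩
    all_goals simp only [borelMove_apply, Fin.ext_iff]
    · split_ifs with h₁ h₂
      · rfl
      · omega
      · exact hlt j (by omega)
    · rw [if_neg (by omega), if_pos trivial, hgt ⟨k + 1, hk⟩ (Nat.lt_succ_self k)]
      linarith [hP ha ⟨k, by omega⟩]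
    · rw [if_neg (by omega), if_neg (by omega), hgt j (by omega)]

lemma exists_single_mem (hB : BorelFixedPt m P) (hP : P ⊆ {x | ∀ k, 0 ≤ x k})
    {a : Fin m → ℝ} (ha : a ∈ P) (i : Fin m) : ∃ s, a i ≤ s ∧ Pi.single i s ∈ P := by
  obtain ⟨b, hb, hlt, hle, -⟩ := hB.exists_mem_vanishing_below hP ha i.isLt
  refine ⟨b i, hle, ?_⟩
  convert hB.truncate_mem hb i.isLt using 1
  funext j
  rcases lt_trichotomy j i with h | rfl | h
  · simp [h.ne, hlt j h]
  · simp
  · simp [h.ne', Nat.not_lt.2 (Nat.succ_le_of_lt h)]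

lemma single_mem_of_isLUB (hB : BorelFixedPt m P) (hP : P ⊆ {x | ∀ k, 0 ≤ x k})
    (hne : P.Nonempty) (hc : IsCompact P) (hconv : Convex ℝ P) {i : Fin m} {w : ℝ}
    (hw : IsLUB ((fun a => a i) '' P) w) : Pi.single i w ∈ P := by
  obtain ⟨a, ha, rfl⟩ :=
    hw.mem_of_isClosed (hne.image _) (hc.image (continuous_apply i)).isClosed
  obtain ⟨s, has, hs⟩ := hB.exists_single_mem hP ha i
  have hseg : Pi.single i (a i) ∈ segment ℝ (Pi.single i 0) (Pi.single i s) := by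
    have := Pi.image_update_segment (𝕜 := ℝ) i 0 s (0 : Fin m → ℝ)
    rw [segment_eq_Icc (hP ha i |>.trans has)] at this
    exact this ▸ mem_image_of_mem _ ⟨hP ha i, has⟩
  rw [Pi.single_zero] at hseg
  exact hconv.segment_subset (hB.zero_mem hne) hs hseg

end BorelFixedPt

end BorelFixed

lemma Convex.sum_smul_mem_of_zero_mem {𝕜 E ι : Type*} [Field 𝕜] [LinearOrder 𝕜]
    [IsStrictOrderedRing 𝕜] [AddCommGroup E] [Module 𝕜 E] [Fintype ι] {s : Set E}
    (hs : Convex 𝕜 s) (h0 : (0 : E) ∈ s) {z : ι → E} (hz : ∀ i, z i ∈ s) {y : ι → 𝕜}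
    (hy₀ : ∀ i, 0 ≤ y i) (hy₁ : ∑ i, y i ≤ 1) : ∑ i, y i • z i ∈ s := by
  have := hs.sum_mem (t := univ) (w := fun o : Option ι => o.elim (1 - ∑ i, y i) y)
    (z := fun o => o.elim 0 z) (by rintro (_ | i) - <;> simp [hy₀, hy₁])
    (by simp [Fintype.sum_option]) (by rintro (_ | i) - <;> simp [h0, hz])
  simpa [Fintype.sum_option] using this

section CornerSimplex

def cornerSimplex (n : ℕ) (t : ℝ) : Set (Fin n → ℝ) := {y | (∀ i, 0 ≤ y i) ∧ ∑ i, y i ≤ t}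

lemma isClosed_cornerSimplex (n : ℕ) (t : ℝ) : IsClosed (cornerSimplex n t) := by
  simp only [cornerSimplex, ofPred_and, ofPred_forall]
  exact (isClosed_iInter fun i => isClosed_le continuous_const (continuous_apply i)).inter
    (isClosed_le (continuous_finsetSum _ fun i _ => continuous_apply i) continuous_const)

lemma cornerSimplex_eq_empty (n : ℕ) {t : ℝ} (ht : t < 0) : cornerSimplex n t = ∅ :=
  eq_empty_of_forall_notMem fun _ hy =>
    ht.not_ge (le_trans (sum_nonneg fun i _ => hy.1 i) hy.2)

lemma cons_mem_cornerSimplex {n : ℕ} {t s : ℝ} {y : Fin n → ℝ} :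
    Fin.cons s y ∈ cornerSimplex (n + 1) t ↔ 0 ≤ s ∧ y ∈ cornerSimplex n (t - s) := by
  simp only [cornerSimplex, mem_ofPred_eq, Fin.forall_fin_succ, Fin.cons_zero, Fin.cons_succ,
    Fin.sum_cons, le_sub_iff_add_le', and_assoc]

lemma lintegral_Icc_sub_pow_div_factorial (n : ℕ) {t : ℝ} (ht : 0 ≤ t) :
    ∫⁻ s in Icc 0 t, ENNReal.ofReal ((t - s) ^ n / n !) =
      ENNReal.ofReal (t ^ (n + 1) / (n + 1)!) := by
  rw [← ofReal_integral_eq_lintegral_ofReal]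
  · congr 1
    rw [integral_Icc_eq_integral_Ioc, ← intervalIntegral.integral_of_le ht,
      intervalIntegral.integral_comp_sub_left (fun x : ℝ => x ^ n / n !) t]
    simp only [sub_self, sub_zero, intervalIntegral.integral_div, integral_pow]
    push_cast [Nat.factorial_succ]
    field_simp
    ring
  · exact ((continuous_const.sub continuous_id).pow n).div_const _ |>.integrableOn_Icc
  · refine (ae_restrict_iff' measurableSet_Icc).2 (ae_of_all _ fun s hs => ?_)
    have : 0 ≤ t - s := sub_nonneg.2 hs.2
    positivity

theorem volume_cornerSimplex (n : ℕ) {t : ℝ} (ht : 0 ≤ t) :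
    volume (cornerSimplex n t) = ENNReal.ofReal (t ^ n / n !) := by
  induction n generalizing t with
  | zero =>
    have : cornerSimplex 0 t = univ := by ext y; simp [cornerSimplex, ht]
    simp [this, volume_pi]
  | succ n ih =>
    -- Fubini over the first coordinate: the slice at `s` is the corner simplex of size `t - s`.
    set e := (MeasurableEquiv.piFinSuccAbove (fun _ : Fin (n + 1) => ℝ) 0).symm
    have hmeas : MeasurableSet (cornerSimplex (n + 1) t) :=
      (isClosed_cornerSimplex _ _).measurableSet
    have hslice (s : ℝ) : volume (Prod.mk s ⁻¹' (e ⁻¹' cornerSimplex (n + 1) t))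
        = indicator (Icc 0 t) (fun s => ENNReal.ofReal ((t - s) ^ n / n !)) s := by
      have hpre : Prod.mk s ⁻¹' (e ⁻¹' cornerSimplex (n + 1) t)
          = {y | 0 ≤ s ∧ y ∈ cornerSimplex n (t - s)} := by
        ext y
        simp only [e, MeasurableEquiv.piFinSuccAbove_symm_apply, Fin.insertNthEquiv_zero,
          Set.mem_preimage]
        exact cons_mem_cornerSimplex
      by_cases hs : s ∈ Icc 0 t
      · simp [indicator_of_mem hs, hpre, hs.1, ih (sub_nonneg.2 hs.2)]
      · have hts : 0 ≤ s → t - s < 0 := fun h => sub_neg.2 (lt_of_not_ge fun h' => hs ⟨h, h'⟩)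
        have : {y | 0 ≤ s ∧ y ∈ cornerSimplex n (t - s)} = ∅ := by
          ext y
          simp only [mem_ofPred_eq, mem_empty_iff_false, iff_false, not_and]
          exact fun h => by simp [cornerSimplex_eq_empty n (hts h)]
        simp [indicator_of_notMem hs, hpre, this]
    rw [← (volume_preserving_piFinSuccAbove (fun _ => ℝ) 0).symm.measure_preimage
        hmeas.nullMeasurableSet, Measure.volume_eq_prod,
      Measure.prod_apply (hmeas.preimage e.measurable), lintegral_congr hslice,
      lintegral_indicator measurableSet_Icc, lintegral_Icc_sub_pow_div_factorial n ht]

end CornerSimplex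

lemma sum_smul_single_eq_diagonal_mulVec {m : ℕ} (w y : Fin m → ℝ) :
    ∑ i, y i • Pi.single i (w i) = Matrix.toLin' (Matrix.diagonal w) y := by
  ext j
  simp [Matrix.mulVec_diagonal, Pi.single_apply, mul_comm]

theorem ofReal_prod_div_factorial_le_volume {m : ℕ} {P : Set (Fin m → ℝ)} (hconv : Convex ℝ P)
    (h0 : 0 ∈ P) {w : Fin m → ℝ} (hw₀ : ∀ i, 0 ≤ w i) (hw : ∀ i, Pi.single i (w i) ∈ P) :
    ENNReal.ofReal ((∏ i, w i) / m !) ≤ volume P := by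
  set f := Matrix.toLin' (Matrix.diagonal w)
  have hsub : f '' cornerSimplex m 1 ⊆ P := by
    rintro _ ⟨y, ⟨hy₀, hy₁⟩, rfl⟩
    rw [← sum_smul_single_eq_diagonal_mulVec]
    exact hconv.sum_smul_mem_of_zero_mem h0 hw hy₀ hy₁
  have hprod : 0 ≤ ∏ i, w i := prod_nonneg fun i _ => hw₀ i
  calc ENNReal.ofReal ((∏ i, w i) / m !)
      = ENNReal.ofReal |LinearMap.det f| * volume (cornerSimplex m 1) := by
        rw [volume_cornerSimplex m zero_le_one, LinearMap.det_toLin', Matrix.det_diagonal,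
          abs_of_nonneg hprod, ← ENNReal.ofReal_mul hprod, one_pow, mul_one_div]
    _ = volume (f '' cornerSimplex m 1) := (Measure.addHaar_image_linearMap _ f _).symm
    _ ≤ volume P := measure_mono hsub

/-- For a nonempty Borel-fixed compact convex set `P ⊆ ℝ^m_{≥0}` with widths
`w₁(P) ≤ … ≤ w_m(P)`, the Lebesgue volume of `P` satisfies
`(1/m!)·∏ᵢ wᵢ(P) ≤ vol(P) ≤ ∏ᵢ wᵢ(P)`. -/
theorem borelFixed_volume_bounds (m : ℕ) (P : Set (Fin m → ℝ)) (hne : P.Nonempty)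
    (hP : P ⊆ {x | ∀ k, 0 ≤ x k}) (hc : IsCompact P) (hconv : Convex ℝ P)
    (hB : BorelFixedPt m P)
    (w : Fin m → ℝ) (hw : ∀ i, IsLUB ((fun a => a i) '' P) (w i)) :
    ENNReal.ofReal ((∏ i : Fin m, w i) / (Nat.factorial m)) ≤ MeasureTheory.volume P ∧
    MeasureTheory.volume P ≤ ENNReal.ofReal (∏ i : Fin m, w i) := by
  have hle : ∀ x ∈ P, ∀ i, x i ≤ w i := fun x hx i => (hw i).1 ⟨x, hx, rfl⟩
  have hw₀ : ∀ i, 0 ≤ w i := fun i => (hP hne.some_mem i).trans (hle _ hne.some_mem i)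
  refine ⟨ofReal_prod_div_factorial_le_volume hconv (hB.zero_mem hne) hw₀
    fun i => hB.single_mem_of_isLUB hP hne hc hconv (hw i), ?_⟩
  calc volume P ≤ volume (Icc 0 w) := measure_mono fun x hx => ⟨hP hx, hle x hx⟩
    _ = ENNReal.ofReal (∏ i, w i) := by
      rw [Real.volume_Icc_pi, ENNReal.ofReal_prod_of_nonneg fun i _ => hw₀ i]
      simp
end

section
/- Let P ⊆ ℝ^n_{≥0} be a nonempty Borel-fixed compact convex set with widths w_1(P) ≤ … ≤ w_n(P), and for t ≥ 0 let V(t) denote the (n-1)-dimensional volume of the slice P ∩ {α ∈ ℝ^n : α_1 + … + α_n = t}. Then V is nonincreasing on the interval [w_{n-1}(P), w_n(P)): if w_{n-1}(P) ≤ t ≤ t + δ < w_n(P) with δ ≥ 0, then the translation by -δ·e_n maps the slice at level t+δ injectively into the slice at level t, hence V(t+δ) ≤ V(t). -/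
lemma collapse_aux (m : ℕ) (P : Set (Fin m → ℝ)) (hB : BorelFixedPt m P)
    (a : Fin m → ℝ) (ha : a ∈ P) :
    ∀ iv : ℕ, ∀ h : iv < m, ∃ b ∈ P,
      b ⟨iv, h⟩ = ∑ k ∈ Finset.univ.filter (fun k : Fin m => k.val ≤ iv), a k ∧
      ∀ j : Fin m, iv < j.val → b j = a j := by
  intro iv
  induction iv with
  | zero =>
    intro h
    refine ⟨a, ha, ?_, fun j hj => rfl⟩
    have : Finset.univ.filter (fun k : Fin m => k.val ≤ 0) = {(⟨0, h⟩ : Fin m)} := by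
      ext k
      simp [Fin.ext_iff]
    rw [this, Finset.sum_singleton]
  | succ iv ih =>
    intro h
    obtain ⟨b, hbP, hbv, hbj⟩ := ih (by omega)
    have hmem := hB b hbP ⟨iv, by omega⟩
    rw [borelMove, dif_pos (by simpa using h)] at hmem
    refine ⟨_, hmem, ?_, ?_⟩
    · have h1 : (⟨(⟨iv, by omega⟩ : Fin m).val + 1, by simpa using h⟩ : Fin m) = ⟨iv + 1, h⟩ := rfl
      rw [h1, Function.update_self]
      have h2 : Finset.univ.filter (fun k : Fin m => k.val ≤ iv + 1)
          = insert (⟨iv + 1, h⟩ : Fin m) (Finset.univ.filter (fun k : Fin m => k.val ≤ iv)) := by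
        ext k
        simp [Fin.ext_iff]
        omega
      rw [h2, Finset.sum_insert (by simp)]
      rw [hbv, hbj ⟨iv+1, h⟩ (by simp)]
      ring
    · intro j hj
      have hne1 : j ≠ (⟨(⟨iv, by omega⟩ : Fin m).val + 1, by simpa using h⟩ : Fin m) := by
        simp [Fin.ext_iff]; omega
      have hne2 : j ≠ (⟨iv, by omega⟩ : Fin m) := by simp [Fin.ext_iff]; omega
      rw [Function.update_of_ne hne1, Function.update_of_ne hne2]
      exact hbj j (by omega)

/-- For a nonempty Borel-fixed compact convex set `P ⊆ ℝⁿ_{≥0}` with widths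
`w₁(P) ≤ … ≤ wₙ(P)`, and `V(t)` the `(n-1)`-dimensional volume of the slice
`P ∩ {α₁ + … + αₙ = t}` (computed via the coordinate projection forgetting the
last coordinate), the function `V` is nonincreasing on `[w_{n-1}(P), wₙ(P))`:
if `w_{n-1}(P) ≤ t` and `t + δ < wₙ(P)` with `δ ≥ 0`, the translation by `-δ·eₙ`
maps the slice at level `t + δ` injectively into the slice at level `t`, and hence
`V(t + δ) ≤ V(t)`. -/
theorem borelFixed_slice_volume_nonincreasing (n : ℕ) (hn : 1 ≤ n)
    (P : Set (Fin n → ℝ)) (hne : P.Nonempty)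
    (hP : P ⊆ {x | ∀ k, 0 ≤ x k}) (hc : IsCompact P) (hconv : Convex ℝ P)
    (hB : BorelFixedPt n P)
    (w : Fin n → ℝ) (hw : ∀ i, IsLUB ((fun a => a i) '' P) (w i))
    (V : ℝ → ENNReal)
    (hV : ∀ s : ℝ, V s = MeasureTheory.volume
      ((fun a (j : Fin (n - 1)) => a (Fin.castLE (Nat.sub_le n 1) j)) ''
        {a ∈ P | ∑ k, a k = s}))
    (t δ : ℝ) (hδ : 0 ≤ δ)
    (hlo : w ⟨n - 1 - 1, by omega⟩ ≤ t) (hhi : t + δ < w ⟨n - 1, by omega⟩) :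
    (∀ a ∈ P, (∑ k, a k = t + δ) →
      a - δ • (Pi.single (⟨n - 1, by omega⟩ : Fin n) 1 : Fin n → ℝ) ∈ P ∧
      ∑ k, (a - δ • (Pi.single (⟨n - 1, by omega⟩ : Fin n) 1 : Fin n → ℝ)) k = t) ∧
    Set.InjOn (fun a : Fin n → ℝ => a - δ • (Pi.single (⟨n - 1, by omega⟩ : Fin n) 1 : Fin n → ℝ))
      {a ∈ P | ∑ k, a k = t + δ} ∧
    V (t + δ) ≤ V t := by
  -- the last index
  set i1 : Fin n := ⟨n - 1, by omega⟩ with hi1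
  set e : Fin n → ℝ := Pi.single i1 1 with he
  -- degenerate case n = 1 is vacuous
  rcases eq_or_lt_of_le hn with h1 | h2
  · exfalso
    have hEq : (⟨n - 1 - 1, by omega⟩ : Fin n) = i1 := by
      apply Fin.ext; show n - 1 - 1 = n - 1; omega
    rw [hEq] at hlo
    linarith
  -- now 2 ≤ n
  have hsumE : ∑ k, e k = 1 := by
    rw [he]; simp [Pi.single_apply]
  have hEoff : ∀ j : Fin n, j ≠ i1 → e j = 0 := by
    intro j hj; rw [he]; exact Pi.single_eq_of_ne hj 1
  have hEon : e i1 = 1 := by rw [he]; simp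
  -- lower bound on the last coordinate
  have key1 : ∀ a ∈ P, (∑ k, a k = t + δ) → δ ≤ a i1 := by
    intro a haP haS
    obtain ⟨b, hbP, hbv, -⟩ := collapse_aux n P hB a haP (n - 2) (by omega)
    have hble : b ⟨n - 2, by omega⟩ ≤ t := by
      refine le_trans ((hw ⟨n - 2, by omega⟩).1 ⟨b, hbP, rfl⟩) ?_
      have hEq : (⟨n - 1 - 1, by omega⟩ : Fin n) = ⟨n - 2, by omega⟩ := by
        apply Fin.ext; show n - 1 - 1 = n - 2; omega
      rw [hEq] at hlo; exact hlo
    rw [hbv] at hble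
    have hsplit : ∑ k ∈ Finset.univ.filter (fun k : Fin n => k.val ≤ n - 2), a k
        + ∑ k ∈ Finset.univ.filter (fun k : Fin n => ¬ k.val ≤ n - 2), a k = ∑ k, a k :=
      Finset.sum_filter_add_sum_filter_not _ _ _
    have hcompl : Finset.univ.filter (fun k : Fin n => ¬ k.val ≤ n - 2) = {i1} := by
      ext k
      simp [hi1, Fin.ext_iff]
      omega
    rw [hcompl, Finset.sum_singleton, haS] at hsplit
    linarith
  have key : ∀ a ∈ P, (∑ k, a k = t + δ) → a - δ • e ∈ P ∧ ∑ k, (a - δ • e) k = t := by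
    intro a haP haS
    have hδa : δ ≤ a i1 := key1 a haP haS
    constructor
    · -- membership, via convexity with the truncated point
      have hmove := hB a haP i1
      rw [borelMove, dif_neg (by show ¬ ((i1 : ℕ) + 1 < n); simp [hi1]; omega)] at hmove
      rcases lt_or_eq_of_le (hP haP i1) with hpos | hzero
      · -- a i1 > 0 : convex combination
        have hai : a i1 ≠ 0 := ne_of_gt hpos
        have hcomb : a - δ • e =
            (1 - δ / a i1) • a + (δ / a i1) • Function.update a i1 0 := by
          funext j
          by_cases hj : j = i1
          · subst hj
            simp [hEon, Function.update_self]
            field_simp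
          · simp [hEoff j hj, Function.update_of_ne hj]
            ring
        rw [hcomb]
        exact hconv haP hmove
          (by
            have : δ / a i1 ≤ 1 := (div_le_one hpos).2 hδa
            linarith)
          (by positivity) (by ring)
      · -- a i1 = 0 forces δ = 0
        have hδ0 : δ = 0 := le_antisymm (hzero ▸ hδa) hδ
        simpa [hδ0] using haP
    · simp only [Pi.sub_apply]
      rw [Finset.sum_sub_distrib]
      have : ∑ k, (δ • e) k = δ := by
        simp only [Pi.smul_apply, smul_eq_mul, ← Finset.mul_sum, hsumE, mul_one]
      rw [haS, this]; ring
  refine ⟨fun a haP haS => key a haP haS, ?_, ?_⟩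
  · intro x _ y _ hxy
    have := congrArg (· + δ • e) hxy
    simpa using this
  · rw [hV, hV]
    apply MeasureTheory.measure_mono
    rintro _ ⟨a, ⟨haP, haS⟩, rfl⟩
    refine ⟨a - δ • e, ⟨(key a haP haS).1, (key a haP haS).2⟩, ?_⟩
    funext j
    show (a - δ • e) (Fin.castLE _ j) = a (Fin.castLE _ j)
    have hne' : (Fin.castLE (Nat.sub_le n 1) j) ≠ i1 := by
      intro hcon
      have := congrArg Fin.val hcon
      simp [hi1] at this
      omega
    simp [hEoff _ hne']
end
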